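/- arXiv:2605.26033 — 3 statements merged into one kernel-verified Lean document; each statement's English description precedes it below -/
import Mathlib

section
/- Suppose Γ_L is a subgroup of the group (ℝ^q × ℝ^m, ∘), and suppose there exist constants C₀ > 0, γ₁ > 0 and γ₂ ≥ 0 such that the relative discrepancy satisfies P(R) ≤ C₀ · R^{−γ₁} (log R)^{γ₂} for every R ≥ 8. Then there exists a constant C > 0 (depending only on q, m, α, M, L, C₀, γ₁, γ₂) such that for every δ ∈ (0,1), every R ≥ 10 and every (x,t) ∈ Γ_L, the number of points of Γ_L in the shell B_{R+δ}^{α,M}(x,t) \ B_{R−δ}^{α,M}(x,t) is at most C · max{R^{Q−1}δ, R^{Q−γ₁}(log R)^{γ₂}}. -/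
open MeasureTheory Matrix

/-- Euclidean norm of a vector in `Fin n → ℝ`. -/
noncomputable def eNorm {n : ℕ} (v : Fin n → ℝ) : ℝ := Real.sqrt (∑ i, v i ^ 2)

/-- The homogeneous norm `N_{α,M}(x,t) = (|M₁x|^α + |M₂t|^{α/2})^{1/α}`. -/
noncomputable def homNorm {q m : ℕ} (α : ℝ) (M₁ : Matrix (Fin q) (Fin q) ℝ)
    (M₂ : Matrix (Fin m) (Fin m) ℝ) (p : (Fin q → ℝ) × (Fin m → ℝ)) : ℝ :=
  (eNorm (M₁.mulVec p.1) ^ α + eNorm (M₂.mulVec p.2) ^ (α / 2)) ^ (1 / α)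

/-- The ball `B_R^{α,M}`. -/
noncomputable def homBall {q m : ℕ} (α : ℝ) (M₁ : Matrix (Fin q) (Fin q) ℝ)
    (M₂ : Matrix (Fin m) (Fin m) ℝ) (R : ℝ) : Set ((Fin q → ℝ) × (Fin m → ℝ)) :=
  {p | homNorm α M₁ M₂ p ≤ R}

/-- The lattice point `(L₁ k', L₂ k'')`. -/
noncomputable def latticePoint {q m : ℕ} (L₁ : Matrix (Fin q) (Fin q) ℝ)
    (L₂ : Matrix (Fin m) (Fin m) ℝ) (k : (Fin q → ℤ) × (Fin m → ℤ)) :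
    (Fin q → ℝ) × (Fin m → ℝ) :=
  (L₁.mulVec (fun i => (k.1 i : ℝ)), L₂.mulVec (fun i => (k.2 i : ℝ)))

/-- `#(Γ_L ∩ B_R^{α,M})`. -/
noncomputable def latticeCount {q m : ℕ} (α : ℝ) (M₁ : Matrix (Fin q) (Fin q) ℝ)
    (M₂ : Matrix (Fin m) (Fin m) ℝ) (L₁ : Matrix (Fin q) (Fin q) ℝ)
    (L₂ : Matrix (Fin m) (Fin m) ℝ) (R : ℝ) : ℕ :=
  Nat.card {k : (Fin q → ℤ) × (Fin m → ℤ) // latticePoint L₁ L₂ k ∈ homBall α M₁ M₂ R}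

/-- The relative discrepancy `P(R)`. -/
noncomputable def discrepancy {q m : ℕ} (α : ℝ) (M₁ : Matrix (Fin q) (Fin q) ℝ)
    (M₂ : Matrix (Fin m) (Fin m) ℝ) (L₁ : Matrix (Fin q) (Fin q) ℝ)
    (L₂ : Matrix (Fin m) (Fin m) ℝ) (R : ℝ) : ℝ :=
  |L₁.det * L₂.det| / ((volume (homBall α M₁ M₂ 1)).toReal * R ^ (q + 2 * m)) *
    abs ((latticeCount α M₁ M₂ L₁ L₂ R : ℝ) -
      (volume (homBall α M₁ M₂ 1)).toReal * R ^ (q + 2 * m) / |L₁.det * L₂.det|)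

/-- The step-two group law `(x,t)∘(x',t')`. -/
noncomputable def grpMul {q m : ℕ} (U : Fin m → Matrix (Fin q) (Fin q) ℝ)
    (p p' : (Fin q → ℝ) × (Fin m → ℝ)) : (Fin q → ℝ) × (Fin m → ℝ) :=
  (p.1 + p'.1, fun j => p.2 j + p'.2 j + (1/2) * ((U j).mulVec p.1 ⬝ᵥ p'.1))

/-- The group inverse `(x,t)⁻¹`. -/
noncomputable def grpInv {q m : ℕ} (U : Fin m → Matrix (Fin q) (Fin q) ℝ)
    (p : (Fin q → ℝ) × (Fin m → ℝ)) : (Fin q → ℝ) × (Fin m → ℝ) :=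
  (-p.1, fun j => -p.2 j + (1/2) * ((U j).mulVec p.1 ⬝ᵥ p.1))

/-- The lattice `Γ_L` as a set of points. -/
noncomputable def latticeSet {q m : ℕ} (L₁ : Matrix (Fin q) (Fin q) ℝ)
    (L₂ : Matrix (Fin m) (Fin m) ℝ) : Set ((Fin q → ℝ) × (Fin m → ℝ)) :=
  Set.range (latticePoint L₁ L₂)

lemma eNorm_nonneg {n : ℕ} (v : Fin n → ℝ) : 0 ≤ eNorm v := Real.sqrt_nonneg _

lemma norm_le_eNorm {n : ℕ} (v : Fin n → ℝ) : ‖v‖ ≤ eNorm v := by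
  rw [pi_norm_le_iff_of_nonneg (eNorm_nonneg v)]
  intro i
  rw [Real.norm_eq_abs, ← Real.sqrt_sq_eq_abs]
  exact Real.sqrt_le_sqrt (Finset.single_le_sum (f := fun i => v i ^ 2)
    (fun i _ => sq_nonneg _) (Finset.mem_univ i))

lemma eNorm_le_norm {n : ℕ} (v : Fin n → ℝ) : eNorm v ≤ Real.sqrt n * ‖v‖ := by
  rw [← Real.sqrt_sq (norm_nonneg v), ← Real.sqrt_mul (by positivity)]
  apply Real.sqrt_le_sqrt
  calc ∑ i, v i ^ 2 ≤ ∑ _i : Fin n, ‖v‖ ^ 2 := by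
        apply Finset.sum_le_sum
        intro i _
        have := norm_le_pi_norm v i
        rw [Real.norm_eq_abs] at this
        calc v i ^ 2 = |v i| ^ 2 := (sq_abs _).symm
          _ ≤ ‖v‖ ^ 2 := pow_le_pow_left₀ (abs_nonneg _) this 2
    _ = n * ‖v‖ ^ 2 := by simp

lemma mulVec_norm_bound {n : ℕ} (A : Matrix (Fin n) (Fin n) ℝ) :
    ∃ c > 0, ∀ x : Fin n → ℝ, ‖A.mulVec x‖ ≤ c * ‖x‖ := by
  let f := LinearMap.toContinuousLinearMap (Matrix.mulVecLin A)
  refine ⟨‖f‖ + 1, by positivity, fun x => ?_⟩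
  calc ‖A.mulVec x‖ = ‖f x‖ := rfl
    _ ≤ ‖f‖ * ‖x‖ := f.le_opNorm x
    _ ≤ (‖f‖ + 1) * ‖x‖ := by nlinarith [norm_nonneg f, norm_nonneg x]

/-- lower bound via inverse -/

lemma norm_mulVec_lower {n : ℕ} (A : Matrix (Fin n) (Fin n) ℝ) (hA : IsUnit A.det) :
    ∃ c > 0, ∀ x : Fin n → ℝ, ‖x‖ ≤ c * ‖A.mulVec x‖ := by
  obtain ⟨c, hc, hb⟩ := mulVec_norm_bound A⁻¹
  refine ⟨c, hc, fun x => ?_⟩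
  have : A⁻¹.mulVec (A.mulVec x) = x := by
    rw [Matrix.mulVec_mulVec, Matrix.nonsing_inv_mul _ hA, Matrix.one_mulVec]
  calc ‖x‖ = ‖A⁻¹.mulVec (A.mulVec x)‖ := by rw [this]
    _ ≤ c * ‖A.mulVec x‖ := hb _

lemma eNorm_mulVec_lower {n : ℕ} (A : Matrix (Fin n) (Fin n) ℝ) (hA : IsUnit A.det) :
    ∃ c > 0, ∀ x : Fin n → ℝ, ‖x‖ ≤ c * eNorm (A.mulVec x) := by
  obtain ⟨c, hc, hb⟩ := norm_mulVec_lower A hA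
  exact ⟨c, hc, fun x => le_trans (hb x)
    (mul_le_mul_of_nonneg_left (norm_le_eNorm _) hc.le)⟩

lemma eNorm_mulVec_upper {n : ℕ} (A : Matrix (Fin n) (Fin n) ℝ) :
    ∃ c > 0, ∀ x : Fin n → ℝ, eNorm (A.mulVec x) ≤ c * ‖x‖ := by
  obtain ⟨c, hc, hb⟩ := mulVec_norm_bound A
  refine ⟨(Real.sqrt n + 1) * c, by positivity, fun x => ?_⟩
  calc eNorm (A.mulVec x) ≤ Real.sqrt n * ‖A.mulVec x‖ := eNorm_le_norm _
    _ ≤ Real.sqrt n * (c * ‖x‖) := by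
        exact mul_le_mul_of_nonneg_left (hb x) (Real.sqrt_nonneg _)
    _ ≤ (Real.sqrt n + 1) * c * ‖x‖ := by nlinarith [Real.sqrt_nonneg (n:ℝ), norm_nonneg x, hc]

lemma homNorm_nonneg {q m : ℕ} (α : ℝ) (M₁ : Matrix (Fin q) (Fin q) ℝ)
    (M₂ : Matrix (Fin m) (Fin m) ℝ) (p : (Fin q → ℝ) × (Fin m → ℝ)) :
    0 ≤ homNorm α M₁ M₂ p :=
  Real.rpow_nonneg (add_nonneg (Real.rpow_nonneg (eNorm_nonneg _) _)
    (Real.rpow_nonneg (eNorm_nonneg _) _)) _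

lemma homNorm_le_bounds {q m : ℕ} {α : ℝ} (hα : 0 < α) {M₁ : Matrix (Fin q) (Fin q) ℝ}
    {M₂ : Matrix (Fin m) (Fin m) ℝ} {p : (Fin q → ℝ) × (Fin m → ℝ)} {R : ℝ}
    (h : homNorm α M₁ M₂ p ≤ R) :
    0 ≤ R ∧ eNorm (M₁.mulVec p.1) ≤ R ∧ eNorm (M₂.mulVec p.2) ≤ R ^ 2 := by
  have hR : 0 ≤ R := le_trans (homNorm_nonneg α M₁ M₂ p) h
  set A := eNorm (M₁.mulVec p.1) with hA
  set B := eNorm (M₂.mulVec p.2) with hB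
  have hA0 : 0 ≤ A := eNorm_nonneg _
  have hB0 : 0 ≤ B := eNorm_nonneg _
  have hsum : A ^ α + B ^ (α / 2) ≤ R ^ α := by
    have := Real.rpow_le_rpow (homNorm_nonneg α M₁ M₂ p) h hα.le
    rwa [homNorm, ← Real.rpow_mul (by positivity), one_div_mul_cancel hα.ne',
      Real.rpow_one] at this
  have hAR : A ≤ R := by
    have h1 : A ^ α ≤ R ^ α := le_trans (le_add_of_nonneg_right (by positivity)) hsum
    have := Real.rpow_le_rpow (by positivity) h1 (by positivity : (0:ℝ) ≤ 1/α)
    rwa [← Real.rpow_mul hA0, ← Real.rpow_mul hR, mul_one_div_cancel hα.ne',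
      Real.rpow_one, Real.rpow_one] at this
  have hBR : B ≤ R ^ 2 := by
    have h1 : B ^ (α/2) ≤ R ^ α := le_trans (le_add_of_nonneg_left (by positivity)) hsum
    have := Real.rpow_le_rpow (by positivity) h1 (by positivity : (0:ℝ) ≤ 2/α)
    rw [← Real.rpow_mul hB0, ← Real.rpow_mul hR,
      show α/2 * (2/α) = 1 by field_simp, show α * (2/α) = 2 by field_simp,
      Real.rpow_one] at this
    rwa [show (2:ℝ) = ((2:ℕ):ℝ) by norm_num, Real.rpow_natCast] at this
  exact ⟨hR, hAR, hBR⟩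

lemma small_ball_subset_homBall {q m : ℕ} {α : ℝ} (hα : 0 < α)
    (M₁ : Matrix (Fin q) (Fin q) ℝ) (M₂ : Matrix (Fin m) (Fin m) ℝ) :
    ∃ r > 0, Metric.closedBall (0 : (Fin q → ℝ) × (Fin m → ℝ)) r ⊆ homBall α M₁ M₂ 1 := by
  obtain ⟨c₁, hc₁, hb₁⟩ := eNorm_mulVec_upper M₁
  obtain ⟨c₂, hc₂, hb₂⟩ := eNorm_mulVec_upper M₂
  refine ⟨min ((1/2) ^ (1/α) / c₁) ((1/2) ^ (2/α) / c₂), by positivity, fun p hp => ?_⟩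
  rw [Metric.mem_closedBall, dist_zero_right] at hp
  have hp1 : ‖p.1‖ ≤ (1/2) ^ (1/α) / c₁ :=
    le_trans (le_trans (norm_fst_le p) hp) (min_le_left _ _)
  have hp2 : ‖p.2‖ ≤ (1/2) ^ (2/α) / c₂ :=
    le_trans (le_trans (norm_snd_le p) hp) (min_le_right _ _)
  have h1 : eNorm (M₁.mulVec p.1) ≤ (1/2 : ℝ) ^ (1/α) := by
    calc eNorm (M₁.mulVec p.1) ≤ c₁ * ‖p.1‖ := hb₁ _
      _ ≤ c₁ * ((1/2) ^ (1/α) / c₁) := by exact mul_le_mul_of_nonneg_left hp1 hc₁.le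
      _ = (1/2 : ℝ) ^ (1/α) := by field_simp
  have h2 : eNorm (M₂.mulVec p.2) ≤ (1/2 : ℝ) ^ (2/α) := by
    calc eNorm (M₂.mulVec p.2) ≤ c₂ * ‖p.2‖ := hb₂ _
      _ ≤ c₂ * ((1/2) ^ (2/α) / c₂) := by exact mul_le_mul_of_nonneg_left hp2 hc₂.le
      _ = (1/2 : ℝ) ^ (2/α) := by field_simp
  have hA : eNorm (M₁.mulVec p.1) ^ α ≤ 1/2 := by
    have := Real.rpow_le_rpow (eNorm_nonneg _) h1 hα.le
    rwa [← Real.rpow_mul (by norm_num), one_div_mul_cancel hα.ne', Real.rpow_one] at this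
  have hB : eNorm (M₂.mulVec p.2) ^ (α/2) ≤ 1/2 := by
    have := Real.rpow_le_rpow (eNorm_nonneg _) h2 (by positivity : (0:ℝ) ≤ α/2)
    rwa [← Real.rpow_mul (by norm_num), show 2/α * (α/2) = 1 by field_simp,
      Real.rpow_one] at this
  show homNorm α M₁ M₂ p ≤ 1
  rw [homNorm]
  apply Real.rpow_le_one (add_nonneg (Real.rpow_nonneg (eNorm_nonneg _) _)
    (Real.rpow_nonneg (eNorm_nonneg _) _)) (by linarith) (by positivity)

lemma homBall_subset_closedBall {q m : ℕ} {α : ℝ} (hα : 0 < α)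
    (M₁ : Matrix (Fin q) (Fin q) ℝ) (M₂ : Matrix (Fin m) (Fin m) ℝ)
    (hM₁ : IsUnit M₁.det) (hM₂ : IsUnit M₂.det) (R : ℝ) (hR : 0 ≤ R) :
    ∃ r > 0, homBall α M₁ M₂ R ⊆
      Metric.closedBall (0 : (Fin q → ℝ) × (Fin m → ℝ)) r := by
  obtain ⟨c₁, hc₁, hb₁⟩ := eNorm_mulVec_lower M₁ hM₁
  obtain ⟨c₂, hc₂, hb₂⟩ := eNorm_mulVec_lower M₂ hM₂
  refine ⟨max (c₁ * R) (c₂ * R^2) + 1, by positivity, fun p hp => ?_⟩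
  obtain ⟨-, h1, h2⟩ := homNorm_le_bounds hα hp
  rw [Metric.mem_closedBall, dist_zero_right, Prod.norm_def]
  have e1 : ‖p.1‖ ≤ c₁ * R := le_trans (hb₁ _) (mul_le_mul_of_nonneg_left h1 hc₁.le)
  have e2 : ‖p.2‖ ≤ c₂ * R^2 := le_trans (hb₂ _) (mul_le_mul_of_nonneg_left h2 hc₂.le)
  apply max_le <;> [skip; skip] <;>
    [exact le_trans e1 (le_trans (le_max_left _ _) (by linarith [le_max_left (c₁*R) (c₂*R^2)]));
     exact le_trans e2 (le_trans (le_max_right _ _) (by linarith [le_max_left (c₁*R) (c₂*R^2)]))]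

lemma homBall_volume_pos {q m : ℕ} {α : ℝ} (hα : 0 < α)
    (M₁ : Matrix (Fin q) (Fin q) ℝ) (M₂ : Matrix (Fin m) (Fin m) ℝ)
    (hM₁ : IsUnit M₁.det) (hM₂ : IsUnit M₂.det) :
    0 < (volume (homBall α M₁ M₂ 1)).toReal := by
  obtain ⟨r, hr, hsub⟩ := small_ball_subset_homBall hα M₁ M₂
  obtain ⟨r', hr', hsub'⟩ := homBall_subset_closedBall hα M₁ M₂ hM₁ hM₂ 1 zero_le_one
  have h1 : 0 < volume (homBall α M₁ M₂ 1) :=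
    lt_of_lt_of_le (Metric.measure_closedBall_pos volume 0 hr) (measure_mono hsub)
  have h2 : volume (homBall α M₁ M₂ 1) < ⊤ :=
    lt_of_le_of_lt (measure_mono hsub') (isCompact_closedBall 0 r').measure_lt_top
  exact ENNReal.toReal_pos h1.ne' h2.ne

lemma latticePoint_injective {q m : ℕ} {L₁ : Matrix (Fin q) (Fin q) ℝ}
    {L₂ : Matrix (Fin m) (Fin m) ℝ} (hL₁ : IsUnit L₁.det) (hL₂ : IsUnit L₂.det) :
    Function.Injective (latticePoint L₁ L₂) := by
  intro k k' h
  rw [latticePoint, latticePoint, Prod.mk.injEq] at h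
  have h1 := Matrix.mulVec_injective_iff_isUnit.mpr
    ((Matrix.isUnit_iff_isUnit_det _).mpr hL₁) h.1
  have h2 := Matrix.mulVec_injective_iff_isUnit.mpr
    ((Matrix.isUnit_iff_isUnit_det _).mpr hL₂) h.2
  ext i
  · exact_mod_cast congrFun h1 i
  · exact_mod_cast congrFun h2 i

lemma lattice_ball_finite {q m : ℕ} {α : ℝ} (hα : 0 < α)
    (M₁ : Matrix (Fin q) (Fin q) ℝ) (M₂ : Matrix (Fin m) (Fin m) ℝ)
    {L₁ : Matrix (Fin q) (Fin q) ℝ} {L₂ : Matrix (Fin m) (Fin m) ℝ}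
    (hL₁ : IsUnit L₁.det) (hL₂ : IsUnit L₂.det)
    (hM₁ : IsUnit M₁.det) (hM₂ : IsUnit M₂.det) (R : ℝ) :
    {k : (Fin q → ℤ) × (Fin m → ℤ) | latticePoint L₁ L₂ k ∈ homBall α M₁ M₂ R}.Finite := by
  obtain ⟨c₁, hc₁, hb₁⟩ := norm_mulVec_lower L₁ hL₁
  obtain ⟨c₂, hc₂, hb₂⟩ := norm_mulVec_lower L₂ hL₂
  obtain ⟨d₁, hd₁, he₁⟩ := eNorm_mulVec_lower M₁ hM₁
  obtain ⟨d₂, hd₂, he₂⟩ := eNorm_mulVec_lower M₂ hM₂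
  set b : ℝ := max (c₁ * (d₁ * R)) (c₂ * (d₂ * R^2)) with hb
  set B : ℤ := max ⌈b⌉ 0 with hBdef
  apply Set.Finite.subset (Set.Finite.prod
    (Set.finite_Icc (fun _ => -B : Fin q → ℤ) (fun _ => B))
    (Set.finite_Icc (fun _ => -B : Fin m → ℤ) (fun _ => B)))
  rintro ⟨k₁, k₂⟩ hk
  obtain ⟨hR, h1, h2⟩ := homNorm_le_bounds hα hk
  have n1 : ‖(fun i => (k₁ i : ℝ))‖ ≤ b := by
    calc ‖(fun i => (k₁ i : ℝ))‖ ≤ c₁ * ‖L₁.mulVec (fun i => (k₁ i : ℝ))‖ := hb₁ _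
      _ ≤ c₁ * (d₁ * eNorm (M₁.mulVec (L₁.mulVec (fun i => (k₁ i : ℝ))))) := by
          exact mul_le_mul_of_nonneg_left (he₁ _) hc₁.le
      _ ≤ c₁ * (d₁ * R) := by
          exact mul_le_mul_of_nonneg_left (mul_le_mul_of_nonneg_left h1 hd₁.le) hc₁.le
      _ ≤ b := le_max_left _ _
  have n2 : ‖(fun i => (k₂ i : ℝ))‖ ≤ b := by
    calc ‖(fun i => (k₂ i : ℝ))‖ ≤ c₂ * ‖L₂.mulVec (fun i => (k₂ i : ℝ))‖ := hb₂ _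
      _ ≤ c₂ * (d₂ * eNorm (M₂.mulVec (L₂.mulVec (fun i => (k₂ i : ℝ))))) := by
          exact mul_le_mul_of_nonneg_left (he₂ _) hc₂.le
      _ ≤ c₂ * (d₂ * R^2) := by
          exact mul_le_mul_of_nonneg_left (mul_le_mul_of_nonneg_left h2 hd₂.le) hc₂.le
      _ ≤ b := le_max_right _ _
  have hbB : b ≤ (B : ℝ) := by
    calc b ≤ (⌈b⌉ : ℝ) := Int.le_ceil b
      _ ≤ (B : ℝ) := by exact_mod_cast le_max_left _ _
  have key : ∀ {nn : ℕ} (v : Fin nn → ℤ), ‖(fun i => (v i : ℝ))‖ ≤ b →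
      v ∈ Set.Icc (fun _ => -B : Fin nn → ℤ) (fun _ => B) := by
    intro nn v hv
    have habs : ∀ i, |(v i : ℝ)| ≤ b := by
      intro i
      have := le_trans (norm_le_pi_norm (fun i => (v i : ℝ)) i) hv
      rwa [Real.norm_eq_abs] at this
    constructor <;> intro i <;>
    · have h := abs_le.mp (habs i)
      first
        | · have : ((-B : ℤ) : ℝ) ≤ (v i : ℝ) := by push_cast; linarith [h.1]
            exact_mod_cast this
        | · have : (v i : ℝ) ≤ ((B : ℤ) : ℝ) := by push_cast; linarith [h.2]
            exact_mod_cast this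
  exact Set.mem_prod.mpr ⟨key k₁ n1, key k₂ n2⟩

lemma grp_cancel_left {q m : ℕ} (U : Fin m → Matrix (Fin q) (Fin q) ℝ)
    (z p : (Fin q → ℝ) × (Fin m → ℝ)) :
    grpMul U z (grpMul U (grpInv U z) p) = p := by
  simp only [grpMul, grpInv]
  refine Prod.ext ?_ ?_
  · simp
  · funext j
    simp only [dotProduct_add, dotProduct_neg, Matrix.mulVec_neg,
      neg_dotProduct]
    ring

lemma grp_cancel_right {q m : ℕ} (U : Fin m → Matrix (Fin q) (Fin q) ℝ)
    (z w : (Fin q → ℝ) × (Fin m → ℝ)) :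
    grpMul U (grpInv U z) (grpMul U z w) = w := by
  simp only [grpMul, grpInv]
  refine Prod.ext ?_ ?_
  · simp
  · funext j
    simp only [dotProduct_add, dotProduct_neg, Matrix.mulVec_neg,
      neg_dotProduct]
    ring

section count

variable {q m : ℕ} {α : ℝ} {M₁ L₁ : Matrix (Fin q) (Fin q) ℝ}
  {M₂ L₂ : Matrix (Fin m) (Fin m) ℝ} {U : Fin m → Matrix (Fin q) (Fin q) ℝ}

lemma latticeCount_eq_ncard (r : ℝ) :
    latticeCount α M₁ M₂ L₁ L₂ r
      = {k : (Fin q → ℤ) × (Fin m → ℤ) | latticePoint L₁ L₂ k ∈ homBall α M₁ M₂ r}.ncard := by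
  rw [latticeCount, ← Nat.card_coe_set_eq]
  rfl

lemma latticeCount_mono (hα : 0 < α) (hM₁ : IsUnit M₁.det) (hM₂ : IsUnit M₂.det)
    (hL₁ : IsUnit L₁.det) (hL₂ : IsUnit L₂.det) {r₁ r₂ : ℝ} (h : r₁ ≤ r₂) :
    latticeCount α M₁ M₂ L₁ L₂ r₁ ≤ latticeCount α M₁ M₂ L₁ L₂ r₂ := by
  rw [latticeCount_eq_ncard, latticeCount_eq_ncard]
  apply Set.ncard_le_ncard
  · intro k hk; exact le_trans hk h
  · exact lattice_ball_finite hα M₁ M₂ hL₁ hL₂ hM₁ hM₂ r₂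

lemma shell_card (hα : 0 < α) (hM₁ : IsUnit M₁.det) (hM₂ : IsUnit M₂.det)
    (hL₁ : IsUnit L₁.det) (hL₂ : IsUnit L₂.det)
    (hsub_mul : ∀ p ∈ latticeSet L₁ L₂, ∀ p' ∈ latticeSet L₁ L₂,
      grpMul U p p' ∈ latticeSet L₁ L₂)
    (hsub_inv : ∀ p ∈ latticeSet L₁ L₂, grpInv U p ∈ latticeSet L₁ L₂)
    {z : (Fin q → ℝ) × (Fin m → ℝ)} (hz : z ∈ latticeSet L₁ L₂)
    {r₁ r₂ : ℝ} (h12 : r₁ ≤ r₂) :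
    Nat.card {p : (Fin q → ℝ) × (Fin m → ℝ) //
        p ∈ latticeSet L₁ L₂ ∧
        homNorm α M₁ M₂ (grpMul U (grpInv U z) p) ≤ r₂ ∧
        ¬ homNorm α M₁ M₂ (grpMul U (grpInv U z) p) ≤ r₁}
      = latticeCount α M₁ M₂ L₁ L₂ r₂ - latticeCount α M₁ M₂ L₁ L₂ r₁ := by
  classical
  set Sout := {k : (Fin q → ℤ) × (Fin m → ℤ) | latticePoint L₁ L₂ k ∈ homBall α M₁ M₂ r₂}
    with hSout
  set Sin := {k : (Fin q → ℤ) × (Fin m → ℤ) | latticePoint L₁ L₂ k ∈ homBall α M₁ M₂ r₁}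
    with hSin
  have hmono : Sin ⊆ Sout := fun k hk => le_trans hk h12
  have hfin : Sout.Finite := lattice_ball_finite hα M₁ M₂ hL₁ hL₂ hM₁ hM₂ r₂
  have hzinv : grpInv U z ∈ latticeSet L₁ L₂ := hsub_inv z hz
  -- the equivalence
  have hfmem : ∀ k : (Sout \ Sin : Set _),
      grpMul U z (latticePoint L₁ L₂ k.1) ∈ latticeSet L₁ L₂ ∧
      homNorm α M₁ M₂ (grpMul U (grpInv U z) (grpMul U z (latticePoint L₁ L₂ k.1))) ≤ r₂ ∧
      ¬ homNorm α M₁ M₂ (grpMul U (grpInv U z) (grpMul U z (latticePoint L₁ L₂ k.1))) ≤ r₁ := by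
    rintro ⟨k, hk2, hk1⟩
    refine ⟨hsub_mul z hz _ ⟨k, rfl⟩, ?_, ?_⟩
    · rw [grp_cancel_right]; exact hk2
    · rw [grp_cancel_right]; exact hk1
  let f : (Sout \ Sin : Set _) → {p : (Fin q → ℝ) × (Fin m → ℝ) //
        p ∈ latticeSet L₁ L₂ ∧
        homNorm α M₁ M₂ (grpMul U (grpInv U z) p) ≤ r₂ ∧
        ¬ homNorm α M₁ M₂ (grpMul U (grpInv U z) p) ≤ r₁} :=
    fun k => ⟨grpMul U z (latticePoint L₁ L₂ k.1), hfmem k⟩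
  have hbij : Function.Bijective f := by
    constructor
    · rintro ⟨k, hk⟩ ⟨k', hk'⟩ hkk'
      have h0 : grpMul U z (latticePoint L₁ L₂ k) = grpMul U z (latticePoint L₁ L₂ k') :=
        congrArg Subtype.val hkk'
      have := congrArg (fun p => grpMul U (grpInv U z) p) h0
      simp only [grp_cancel_right] at this
      exact Subtype.ext (latticePoint_injective hL₁ hL₂ this)
    · rintro ⟨p, hp, h2, h1⟩
      have hw : grpMul U (grpInv U z) p ∈ latticeSet L₁ L₂ := hsub_mul _ hzinv _ hp
      obtain ⟨k, hk⟩ := hw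
      have hkmem : k ∈ Sout \ Sin := by
        constructor
        · show latticePoint L₁ L₂ k ∈ homBall α M₁ M₂ r₂
          rw [hk]; exact h2
        · show ¬ latticePoint L₁ L₂ k ∈ homBall α M₁ M₂ r₁
          rw [hk]; exact h1
      refine ⟨⟨k, hkmem⟩, ?_⟩
      apply Subtype.ext
      show grpMul U z (latticePoint L₁ L₂ k) = p
      rw [hk, grp_cancel_left]
  have e := Equiv.ofBijective f hbij
  rw [← Nat.card_congr e, Nat.card_coe_set_eq, Set.ncard_diff hmono (hfin.subset hmono),
    latticeCount_eq_ncard, latticeCount_eq_ncard]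

end count

lemma pow_diff_le (n : ℕ) {a b : ℝ} (hb : 0 ≤ b) (hab : b ≤ a) :
    a ^ n - b ^ n ≤ n * a ^ (n - 1) * (a - b) := by
  have ha : 0 ≤ a := le_trans hb hab
  rw [← geom_sum₂_mul]
  apply mul_le_mul_of_nonneg_right _ (by linarith)
  calc ∑ i ∈ Finset.range n, a ^ i * b ^ (n - 1 - i)
      ≤ ∑ _i ∈ Finset.range n, a ^ (n - 1) := by
        apply Finset.sum_le_sum
        intro i hi
        rw [Finset.mem_range] at hi
        calc a ^ i * b ^ (n - 1 - i) ≤ a ^ i * a ^ (n - 1 - i) := by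
              exact mul_le_mul_of_nonneg_left (pow_le_pow_left₀ hb hab _) (by positivity)
          _ = a ^ (i + (n - 1 - i)) := (pow_add a i _).symm
          _ = a ^ (n - 1) := by congr 1; omega
    _ = n * a ^ (n - 1) := by rw [Finset.sum_const, Finset.card_range, nsmul_eq_mul]

lemma rpow_comparison {R S e : ℝ} (hR : 0 < R) (h1 : R / 2 ≤ S) (h2 : S ≤ 2 * R) :
    S ^ e ≤ 2 ^ |e| * R ^ e := by
  have hS : 0 < S := lt_of_lt_of_le (by linarith) h1
  have hq1 : (1:ℝ)/2 ≤ S / R := by rw [div_le_div_iff₀ (by norm_num) hR]; linarith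
  have hq2 : S / R ≤ 2 := by rw [div_le_iff₀ hR]; linarith
  have hSR : S = (S / R) * R := by field_simp
  rw [hSR, Real.mul_rpow (by positivity) hR.le]
  apply mul_le_mul_of_nonneg_right _ (Real.rpow_nonneg hR.le e)
  rcases le_or_gt 0 e with he | he
  · calc (S/R) ^ e ≤ 2 ^ e := Real.rpow_le_rpow (by positivity) hq2 he
      _ ≤ 2 ^ |e| := Real.rpow_le_rpow_of_exponent_le one_le_two (le_abs_self e)
  · calc (S/R) ^ e ≤ ((1:ℝ)/2) ^ e :=
        Real.rpow_le_rpow_of_nonpos (by norm_num) hq1 he.le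
      _ = 2 ^ (-e) := by
          rw [one_div, ← Real.rpow_neg_one, ← Real.rpow_mul (by norm_num)]
          norm_num
      _ = 2 ^ |e| := by rw [abs_of_neg he]

theorem lattice_count_near_sphere {q m : ℕ} (hq : 2 ≤ q) (hm : 1 ≤ m)
    (U : Fin m → Matrix (Fin q) (Fin q) ℝ)
    (M₁ L₁ : Matrix (Fin q) (Fin q) ℝ) (M₂ L₂ : Matrix (Fin m) (Fin m) ℝ)
    (hM₁ : IsUnit M₁.det) (hM₂ : IsUnit M₂.det) (hL₁ : IsUnit L₁.det) (hL₂ : IsUnit L₂.det)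
    (α : ℝ) (hα : 0 < α)
    (hsub_mul : ∀ p ∈ latticeSet L₁ L₂, ∀ p' ∈ latticeSet L₁ L₂,
      grpMul U p p' ∈ latticeSet L₁ L₂)
    (hsub_inv : ∀ p ∈ latticeSet L₁ L₂, grpInv U p ∈ latticeSet L₁ L₂)
    (C₀ γ₁ γ₂ : ℝ) (hC₀ : 0 < C₀) (hγ₁ : 0 < γ₁) (hγ₂ : 0 ≤ γ₂)
    (hdisc : ∀ R ≥ (8 : ℝ),
      discrepancy α M₁ M₂ L₁ L₂ R ≤ C₀ * R ^ (-γ₁) * Real.log R ^ γ₂) :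
    ∃ C > 0, ∀ δ : ℝ, 0 < δ → δ < 1 → ∀ R ≥ (10 : ℝ),
      ∀ z ∈ latticeSet L₁ L₂,
        (Nat.card {p : (Fin q → ℝ) × (Fin m → ℝ) //
            p ∈ latticeSet L₁ L₂ ∧
            homNorm α M₁ M₂ (grpMul U (grpInv U z) p) ≤ R + δ ∧
            ¬ homNorm α M₁ M₂ (grpMul U (grpInv U z) p) ≤ R - δ} : ℝ) ≤
          C * max (R ^ (((q : ℝ) + 2 * m) - 1) * δ)
            (R ^ (((q : ℝ) + 2 * m) - γ₁) * Real.log R ^ γ₂) := by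
  have hv : 0 < (volume (homBall α M₁ M₂ 1)).toReal := homBall_volume_pos hα M₁ M₂ hM₁ hM₂
  set v := (volume (homBall α M₁ M₂ 1)).toReal with hvdef
  have hD : 0 < |L₁.det * L₂.det| := abs_pos.mpr (mul_ne_zero hL₁.ne_zero hL₂.ne_zero)
  set D := |L₁.det * L₂.det| with hDdef
  set Q : ℕ := q + 2 * m with hQdef
  set Qr : ℝ := (q : ℝ) + 2 * m with hQrdef
  have hQ1 : 1 ≤ Q := by omega
  have hQcast : (Q : ℝ) = Qr := by rw [hQdef, hQrdef]; push_cast; ring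
  have hQpos : (0:ℝ) < Q := by rw [hQcast, hQrdef]; positivity
  clear_value Qr
  -- discrepancy consequence
  have hN : ∀ S : ℝ, 8 ≤ S →
      |(latticeCount α M₁ M₂ L₁ L₂ S : ℝ) - v * S ^ Q / D| ≤
        (C₀ * v / D) * (S ^ (Qr - γ₁) * Real.log S ^ γ₂) := by
    intro S hS
    have hS0 : (0:ℝ) < S := by linarith
    have h := hdisc S hS
    rw [discrepancy] at h
    have hpos : (0:ℝ) < v * S ^ Q := by positivity
    have h' : D / (v * S ^ Q) *
        |(latticeCount α M₁ M₂ L₁ L₂ S : ℝ) - v * S ^ Q / D| ≤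
        C₀ * S ^ (-γ₁) * Real.log S ^ γ₂ := h
    have h2 : |(latticeCount α M₁ M₂ L₁ L₂ S : ℝ) - v * S ^ Q / D| ≤
        C₀ * S ^ (-γ₁) * Real.log S ^ γ₂ * ((v * S ^ Q) / D) := by
      have hmul := mul_le_mul_of_nonneg_right h' (le_of_lt (div_pos hpos hD))
      calc |(latticeCount α M₁ M₂ L₁ L₂ S : ℝ) - v * S ^ Q / D|
          = D / (v * S ^ Q) *
              |(latticeCount α M₁ M₂ L₁ L₂ S : ℝ) - v * S ^ Q / D| *
              ((v * S ^ Q) / D) := by field_simp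
        _ ≤ _ := hmul
    calc |(latticeCount α M₁ M₂ L₁ L₂ S : ℝ) - v * S ^ Q / D|
        ≤ C₀ * S ^ (-γ₁) * Real.log S ^ γ₂ * ((v * S ^ Q) / D) := h2
      _ = (C₀ * v / D) * (S ^ (Qr - γ₁) * Real.log S ^ γ₂) := by
          rw [← Real.rpow_natCast S Q, hQcast, show Qr - γ₁ = -γ₁ + Qr by ring,
            Real.rpow_add hS0]
          ring
  -- constants
  set C₁ : ℝ := v / D * Q * 2 ^ Q * 2 with hC₁def
  set C₂ : ℝ := (C₀ * v / D) * (2 ^ |Qr - γ₁| * (2:ℝ) ^ γ₂) with hC₂def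
  have hC₁ : 0 < C₁ := by
    apply mul_pos (mul_pos (mul_pos (div_pos hv hD) hQpos) (by positivity)) two_pos
  have hC₂ : 0 < C₂ := by
    apply mul_pos (div_pos (mul_pos hC₀ hv) hD)
    exact mul_pos (Real.rpow_pos_of_pos two_pos _) (Real.rpow_pos_of_pos two_pos _)
  refine ⟨C₁ + 2 * C₂, by linarith, ?_⟩
  intro δ hδ0 hδ1 R hR z hz
  have hR0 : (0:ℝ) < R := by linarith
  have h12 : R - δ ≤ R + δ := by linarith
  rw [shell_card hα hM₁ hM₂ hL₁ hL₂ hsub_mul hsub_inv hz h12,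
    Nat.cast_sub (latticeCount_mono hα hM₁ hM₂ hL₁ hL₂ h12)]
  have e2 := hN (R + δ) (by linarith)
  have e1 := hN (R - δ) (by linarith)
  have hlogR1 : 1 ≤ Real.log R := by
    rw [Real.le_log_iff_exp_le hR0]
    calc Real.exp 1 ≤ 2.7182818286 := Real.exp_one_lt_d9.le
      _ ≤ 10 := by norm_num
      _ ≤ R := hR
  have hvD : (0:ℝ) ≤ v / D := (div_pos hv hD).le
  -- middle term bound
  have hpowb : (R + δ) ^ (Q - 1) ≤ 2 ^ Q * R ^ (Qr - 1) := by
    calc (R + δ) ^ (Q - 1) ≤ (2 * R) ^ (Q - 1) :=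
          pow_le_pow_left₀ (by linarith) (by linarith) _
      _ = 2 ^ (Q - 1) * R ^ (Q - 1) := mul_pow _ _ _
      _ ≤ 2 ^ Q * R ^ (Q - 1) := by
          apply mul_le_mul_of_nonneg_right
            (pow_le_pow_right₀ one_le_two (Nat.sub_le Q 1)) (by positivity)
      _ = 2 ^ Q * R ^ (Qr - 1) := by
          congr 1
          rw [← Real.rpow_natCast R (Q - 1), Nat.cast_sub hQ1, hQcast, Nat.cast_one]
  have hmid : v * (R + δ) ^ Q / D - v * (R - δ) ^ Q / D ≤ C₁ * (R ^ (Qr - 1) * δ) := by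
    have hd := pow_diff_le Q (show (0:ℝ) ≤ R - δ by linarith)
      (show R - δ ≤ R + δ by linarith)
    calc v * (R + δ) ^ Q / D - v * (R - δ) ^ Q / D
        = (v / D) * ((R + δ) ^ Q - (R - δ) ^ Q) := by ring
      _ ≤ (v / D) * ((Q : ℝ) * (R + δ) ^ (Q - 1) * ((R + δ) - (R - δ))) :=
          mul_le_mul_of_nonneg_left hd hvD
      _ = (v / D) * (Q : ℝ) * 2 * δ * (R + δ) ^ (Q - 1) := by ring
      _ ≤ (v / D) * (Q : ℝ) * 2 * δ * (2 ^ Q * R ^ (Qr - 1)) := by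
          apply mul_le_mul_of_nonneg_left hpowb
          have := Nat.cast_nonneg (α := ℝ) Q
          positivity
      _ = C₁ * (R ^ (Qr - 1) * δ) := by rw [hC₁def]; ring
  -- error term bound
  have hSbound : ∀ S : ℝ, R - 1 ≤ S → S ≤ R + 1 →
      (C₀ * v / D) * (S ^ (Qr - γ₁) * Real.log S ^ γ₂) ≤
        C₂ * (R ^ (Qr - γ₁) * Real.log R ^ γ₂) := by
    intro S hS1 hS2
    have hS0 : (0:ℝ) < S := by linarith
    have hrp := rpow_comparison (S := S) (e := Qr - γ₁) hR0 (by linarith) (by linarith)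
    have hlogS0 : 0 ≤ Real.log S := Real.log_nonneg (by linarith)
    have hlogR0 : (0:ℝ) ≤ Real.log R := by linarith
    have hlogS : Real.log S ≤ 2 * Real.log R := by
      have hlog2 : Real.log 2 ≤ 1 := by
        calc Real.log 2 ≤ Real.log (Real.exp 1) := by
              apply Real.log_le_log two_pos
              calc (2:ℝ) ≤ 2.7182818283 := by norm_num
                _ ≤ Real.exp 1 := Real.exp_one_gt_d9.le
          _ = 1 := Real.log_exp 1
      calc Real.log S ≤ Real.log (2 * R) := Real.log_le_log hS0 (by linarith)
        _ = Real.log 2 + Real.log R := Real.log_mul two_ne_zero hR0.ne'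
        _ ≤ 2 * Real.log R := by linarith
    have hlog := Real.rpow_le_rpow hlogS0 hlogS hγ₂
    rw [Real.mul_rpow (by norm_num) hlogR0] at hlog
    have hmm := mul_le_mul hrp hlog (Real.rpow_nonneg hlogS0 γ₂)
      (mul_nonneg (Real.rpow_nonneg (by norm_num) _) (Real.rpow_nonneg hR0.le _))
    calc (C₀ * v / D) * (S ^ (Qr - γ₁) * Real.log S ^ γ₂)
        ≤ (C₀ * v / D) * ((2 ^ |Qr - γ₁| * R ^ (Qr - γ₁)) *
            ((2:ℝ) ^ γ₂ * Real.log R ^ γ₂)) :=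
          mul_le_mul_of_nonneg_left hmm (le_of_lt (div_pos (mul_pos hC₀ hv) hD))
      _ = C₂ * (R ^ (Qr - γ₁) * Real.log R ^ γ₂) := by rw [hC₂def]; ring
  have a2 := (abs_le.mp e2).2
  have a1 := (abs_le.mp e1).1
  have b2 := hSbound (R + δ) (by linarith) (by linarith)
  have b1 := hSbound (R - δ) (by linarith) (by linarith)
  have hT1 : R ^ (Qr - 1) * δ ≤
      max (R ^ (Qr - 1) * δ) (R ^ (Qr - γ₁) * Real.log R ^ γ₂) := le_max_left _ _
  have hT2 : R ^ (Qr - γ₁) * Real.log R ^ γ₂ ≤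
      max (R ^ (Qr - 1) * δ) (R ^ (Qr - γ₁) * Real.log R ^ γ₂) := le_max_right _ _
  have t1m := mul_le_mul_of_nonneg_left hT1 hC₁.le
  have t2m := mul_le_mul_of_nonneg_left hT2 hC₂.le
  have expand : (C₁ + 2 * C₂) *
      max (R ^ (Qr - 1) * δ) (R ^ (Qr - γ₁) * Real.log R ^ γ₂)
      = C₁ * max (R ^ (Qr - 1) * δ) (R ^ (Qr - γ₁) * Real.log R ^ γ₂)
        + 2 * (C₂ * max (R ^ (Qr - 1) * δ) (R ^ (Qr - γ₁) * Real.log R ^ γ₂)) := by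
    ring
  linarith
end

section
/- Let α > 0 and let M₁, M₂ be invertible. The homogeneous norm N_{α,M} is subadditive with respect to Euclidean addition, i.e. N_{α,M}((x,t) + (x',t')) ≤ N_{α,M}(x,t) + N_{α,M}(x',t') for all (x,t), (x',t') ∈ ℝ^q × ℝ^m, if and only if α ≥ 1. -/
open MeasureTheory Matrix

lemma eNorm_eq {n : ℕ} (v : Fin n → ℝ) :
    eNorm v = ‖(EuclideanSpace.equiv (Fin n) ℝ).symm v‖ := by
  rw [EuclideanSpace.norm_eq]
  simp [eNorm, sq_abs]

lemma eNorm_add_le {n : ℕ} (u v : Fin n → ℝ) : eNorm (u + v) ≤ eNorm u + eNorm v := by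
  simp only [eNorm_eq]
  exact norm_add_le _ _

lemma eNorm_zero {n : ℕ} : eNorm (0 : Fin n → ℝ) = 0 := by simp [eNorm_eq]

lemma eNorm_single {n : ℕ} (i : Fin n) : eNorm (Pi.single i 1) = 1 := by
  simp [eNorm, Pi.single_apply, Finset.sum_ite_eq']

lemma rpow_add_le_add_rpow_real {u v p : ℝ} (hu : 0 ≤ u) (hv : 0 ≤ v) (hp0 : 0 ≤ p)
    (hp : p ≤ 1) : (u + v) ^ p ≤ u ^ p + v ^ p := by
  lift u to NNReal using hu
  lift v to NNReal using hv
  have := NNReal.rpow_add_le_add_rpow u v hp0 hp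
  exact_mod_cast this

lemma minkowski2 {p a₁ a₂ b₁ b₂ : ℝ} (hp : 1 ≤ p) (ha₁ : 0 ≤ a₁) (ha₂ : 0 ≤ a₂)
    (hb₁ : 0 ≤ b₁) (hb₂ : 0 ≤ b₂) :
    ((a₁ + a₂) ^ p + (b₁ + b₂) ^ p) ^ (1 / p) ≤
      (a₁ ^ p + b₁ ^ p) ^ (1 / p) + (a₂ ^ p + b₂ ^ p) ^ (1 / p) := by
  have := Real.Lp_add_le Finset.univ ![a₁, b₁] ![a₂, b₂] hp
  simp only [Fin.sum_univ_two, Matrix.cons_val_zero, Matrix.cons_val_one, Matrix.head_cons] at this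
  rwa [abs_of_nonneg (by positivity), abs_of_nonneg (by positivity),
    abs_of_nonneg ha₁, abs_of_nonneg hb₁, abs_of_nonneg ha₂, abs_of_nonneg hb₂] at this

theorem homNorm_subadditive_iff {q m : ℕ} (hq : 2 ≤ q) (hm : 1 ≤ m)
    (M₁ : Matrix (Fin q) (Fin q) ℝ) (M₂ : Matrix (Fin m) (Fin m) ℝ)
    (hM₁ : IsUnit M₁.det) (hM₂ : IsUnit M₂.det) (α : ℝ) (hα : 0 < α) :
    (∀ p p' : (Fin q → ℝ) × (Fin m → ℝ),
        homNorm α M₁ M₂ (p + p') ≤ homNorm α M₁ M₂ p + homNorm α M₁ M₂ p') ↔ 1 ≤ α := by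
  constructor
  · intro h
    have h0q : (0 : ℕ) < q := by omega
    have h0m : (0 : ℕ) < m := by omega
    set x : Fin q → ℝ := (M₁⁻¹).mulVec (Pi.single ⟨0, h0q⟩ 1) with hxdef
    set t : Fin m → ℝ := (M₂⁻¹).mulVec (Pi.single ⟨0, h0m⟩ 1) with htdef
    have hx : M₁.mulVec x = Pi.single ⟨0, h0q⟩ 1 := by
      rw [hxdef, mulVec_mulVec, Matrix.mul_nonsing_inv _ hM₁, one_mulVec]
    have ht : M₂.mulVec t = Pi.single ⟨0, h0m⟩ 1 := by
      rw [htdef, mulVec_mulVec, Matrix.mul_nonsing_inv _ hM₂, one_mulVec]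
    have key := h (x, 0) (0, t)
    have hαne : α ≠ 0 := ne_of_gt hα
    have hα2ne : α / 2 ≠ 0 := by positivity
    simp only [homNorm, Prod.mk_add_mk, add_zero, zero_add] at key
    rw [hx, ht, eNorm_single, eNorm_single] at key
    simp only [mulVec_zero, eNorm_zero, Real.one_rpow, Real.zero_rpow hαne,
      Real.zero_rpow hα2ne, add_zero, zero_add] at key
    have h2 : (2 : ℝ) ^ (1 / α) ≤ (2 : ℝ) ^ (1 : ℝ) := by
      rw [Real.rpow_one]
      norm_num at key ⊢
      exact key
    have hle := (Real.rpow_le_rpow_left_iff (by norm_num : (1:ℝ) < 2)).mp h2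
    linarith [(div_le_one hα).mp hle]
  · intro hα1 p p'
    obtain ⟨x, t⟩ := p
    obtain ⟨x', t'⟩ := p'
    set a₁ := eNorm (M₁.mulVec x) with ha₁def
    set a₂ := eNorm (M₁.mulVec x') with ha₂def
    set b₁ := eNorm (M₂.mulVec t) ^ ((1 : ℝ) / 2) with hb₁def
    set b₂ := eNorm (M₂.mulVec t') ^ ((1 : ℝ) / 2) with hb₂def
    have ha₁ : 0 ≤ a₁ := eNorm_nonneg _
    have ha₂ : 0 ≤ a₂ := eNorm_nonneg _
    have hb₁ : 0 ≤ b₁ := Real.rpow_nonneg (eNorm_nonneg _) _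
    have hb₂ : 0 ≤ b₂ := Real.rpow_nonneg (eNorm_nonneg _) _
    have hhalf : ∀ c : ℝ, 0 ≤ c → c ^ (α / 2) = (c ^ ((1:ℝ)/2)) ^ α := by
      intro c hc
      rw [← Real.rpow_mul hc]
      ring_nf
    have hA : eNorm (M₁.mulVec (x + x')) ≤ a₁ + a₂ := by
      rw [mulVec_add]; exact eNorm_add_le _ _
    have hB : eNorm (M₂.mulVec (t + t')) ^ ((1:ℝ)/2) ≤ b₁ + b₂ := by
      calc eNorm (M₂.mulVec (t + t')) ^ ((1:ℝ)/2)
          ≤ (eNorm (M₂.mulVec t) + eNorm (M₂.mulVec t')) ^ ((1:ℝ)/2) := by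
            apply Real.rpow_le_rpow (eNorm_nonneg _) _ (by norm_num)
            rw [mulVec_add]; exact eNorm_add_le _ _
        _ ≤ b₁ + b₂ :=
            rpow_add_le_add_rpow_real (eNorm_nonneg _) (eNorm_nonneg _) (by norm_num) (by norm_num)
    simp only [homNorm]
    rw [hhalf _ (eNorm_nonneg _), hhalf _ (eNorm_nonneg _), hhalf _ (eNorm_nonneg _)]
    calc (eNorm (M₁.mulVec (x + x', t + t').1) ^ α
            + (eNorm (M₂.mulVec (x + x', t + t').2) ^ ((1:ℝ)/2)) ^ α) ^ (1 / α)
        ≤ ((a₁ + a₂) ^ α + (b₁ + b₂) ^ α) ^ (1 / α) := by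
          apply Real.rpow_le_rpow (add_nonneg (Real.rpow_nonneg (eNorm_nonneg _) _)
            (Real.rpow_nonneg (Real.rpow_nonneg (eNorm_nonneg _) _) _)) _ (by positivity)
          exact add_le_add
            (Real.rpow_le_rpow (eNorm_nonneg _) hA (le_of_lt hα))
            (Real.rpow_le_rpow (Real.rpow_nonneg (eNorm_nonneg _) _) hB (le_of_lt hα))
      _ ≤ (a₁ ^ α + b₁ ^ α) ^ (1 / α) + (a₂ ^ α + b₂ ^ α) ^ (1 / α) :=
          minkowski2 hα1 ha₁ ha₂ hb₁ hb₂
end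

section
/- Let α = 2 and m = 1, and suppose the matrix ML = diag(M₁L₁, M₂L₂) is δ-rational, i.e. there exists c > 0 such that c·M₁L₁ and c²·M₂L₂ both have integer entries. Then the relative discrepancy is not o(R^{−2}): there exist ε > 0 and a sequence R_n → ∞ such that P(R_n) ≥ ε · R_n^{−2} for all n. Equivalently, the counting error |#(Γ_L ∩ B_R^{2,M}) − vol(B₁^{2,M}) R^Q / |det L|| is not o(R^{Q−2}) as R → ∞. -/
open MeasureTheory Matrix

lemma eNorm_sq {n : ℕ} (v : Fin n → ℝ) : eNorm v ^ 2 = ∑ i, v i ^ 2 :=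
  Real.sq_sqrt (Finset.sum_nonneg fun _ _ => sq_nonneg _)

lemma homNorm_two {q m : ℕ} (M₁ : Matrix (Fin q) (Fin q) ℝ) (M₂ : Matrix (Fin m) (Fin m) ℝ)
    (p : (Fin q → ℝ) × (Fin m → ℝ)) :
    homNorm 2 M₁ M₂ p = Real.sqrt (eNorm (M₁.mulVec p.1) ^ 2 + eNorm (M₂.mulVec p.2)) := by
  unfold homNorm
  rw [Real.sqrt_eq_rpow, show (2:ℝ)/2 = 1 by norm_num, Real.rpow_one,
    show (2:ℝ) = ((2:ℕ):ℝ) by norm_num, Real.rpow_natCast]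

lemma eNorm_fin_one (v : Fin 1 → ℝ) : eNorm v = |v 0| := by
  unfold eNorm
  rw [Fin.sum_univ_one, Real.sqrt_sq_eq_abs]

lemma abs_le_eNorm {n : ℕ} (v : Fin n → ℝ) (i : Fin n) : |v i| ≤ eNorm v := by
  rw [← Real.sqrt_sq_eq_abs]
  exact Real.sqrt_le_sqrt (Finset.single_le_sum (fun j _ => sq_nonneg (v j)) (Finset.mem_univ i))

lemma vol_homBall_pos {q m : ℕ} (M₁ : Matrix (Fin q) (Fin q) ℝ) (M₂ : Matrix (Fin m) (Fin m) ℝ)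
    (hM₁ : IsUnit M₁.det) (hM₂ : IsUnit M₂.det) :
    0 < (volume (homBall 2 M₁ M₂ 1)).toReal := by
  have hpos : 0 < volume (homBall 2 M₁ M₂ 1) := by
    have hcont : Continuous (fun p : (Fin q → ℝ) × (Fin m → ℝ) =>
        eNorm (M₁.mulVec p.1) ^ 2 + eNorm (M₂.mulVec p.2)) := by
      unfold eNorm
      simp only [Matrix.mulVec, dotProduct]
      fun_prop
    set U : Set ((Fin q → ℝ) × (Fin m → ℝ)) :=
      {p | eNorm (M₁.mulVec p.1) ^ 2 + eNorm (M₂.mulVec p.2) < 1} with hU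
    have hUopen : IsOpen U := isOpen_lt hcont continuous_const
    have hUne : U.Nonempty := by
      refine ⟨0, ?_⟩
      simp only [hU, Set.mem_setOf_eq, Prod.fst_zero, Prod.snd_zero, Matrix.mulVec_zero]
      have h1 : eNorm (0 : Fin q → ℝ) = 0 := by unfold eNorm; simp
      have h2 : eNorm (0 : Fin m → ℝ) = 0 := by unfold eNorm; simp
      rw [h1, h2]; norm_num
    have hsub : U ⊆ homBall 2 M₁ M₂ 1 := by
      intro p hp
      have hp' : eNorm (M₁.mulVec p.1) ^ 2 + eNorm (M₂.mulVec p.2) < 1 := hp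
      show homNorm 2 M₁ M₂ p ≤ 1
      rw [homNorm_two]
      calc Real.sqrt _ ≤ Real.sqrt 1 := Real.sqrt_le_sqrt hp'.le
        _ = 1 := Real.sqrt_one
    calc (0:ENNReal) < volume U := hUopen.measure_pos volume hUne
      _ ≤ _ := measure_mono hsub
  have hfin : volume (homBall 2 M₁ M₂ 1) < ⊤ := by
    set r : ℝ := (∑ i, ∑ j, |M₁⁻¹ i j|) + (∑ i, ∑ j, |M₂⁻¹ i j|) + 1 with hr
    have hsub : homBall 2 M₁ M₂ 1 ⊆ Metric.closedBall 0 r := by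
      intro p hp
      have hp' : homNorm 2 M₁ M₂ p ≤ 1 := hp
      rw [homNorm_two] at hp'
      have hb : 0 ≤ eNorm (M₂.mulVec p.2) := eNorm_nonneg _
      have ha : 0 ≤ eNorm (M₁.mulVec p.1) := eNorm_nonneg _
      have hsum : eNorm (M₁.mulVec p.1) ^ 2 + eNorm (M₂.mulVec p.2) ≤ 1 := by
        have := (Real.sqrt_le_iff.1 hp').2
        linarith [this]
      have h1 : eNorm (M₁.mulVec p.1) ≤ 1 := by nlinarith
      have h2 : eNorm (M₂.mulVec p.2) ≤ 1 := by nlinarith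
      have key1 : ∀ i, |p.1 i| ≤ ∑ i', ∑ j, |M₁⁻¹ i' j| := by
        intro i
        have hp1 : p.1 = M₁⁻¹.mulVec (M₁.mulVec p.1) := by
          rw [Matrix.mulVec_mulVec, Matrix.nonsing_inv_mul _ hM₁, Matrix.one_mulVec]
        calc |p.1 i| = |(M₁⁻¹.mulVec (M₁.mulVec p.1)) i| := by rw [← hp1]
          _ = |∑ j, M₁⁻¹ i j * (M₁.mulVec p.1) j| := rfl
          _ ≤ ∑ j, |M₁⁻¹ i j * (M₁.mulVec p.1) j| := Finset.abs_sum_le_sum_abs _ _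
          _ ≤ ∑ j, |M₁⁻¹ i j| := by
              refine Finset.sum_le_sum fun j _ => ?_
              rw [abs_mul]
              have : |(M₁.mulVec p.1) j| ≤ 1 := le_trans (abs_le_eNorm _ j) h1
              nlinarith [abs_nonneg (M₁⁻¹ i j)]
          _ ≤ ∑ i', ∑ j, |M₁⁻¹ i' j| :=
              Finset.single_le_sum (f := fun i' => ∑ j, |M₁⁻¹ i' j|)
                (fun i' _ => Finset.sum_nonneg fun j _ => abs_nonneg _) (Finset.mem_univ i)
      have key2 : ∀ i, |p.2 i| ≤ ∑ i', ∑ j, |M₂⁻¹ i' j| := by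
        intro i
        have hp2 : p.2 = M₂⁻¹.mulVec (M₂.mulVec p.2) := by
          rw [Matrix.mulVec_mulVec, Matrix.nonsing_inv_mul _ hM₂, Matrix.one_mulVec]
        calc |p.2 i| = |(M₂⁻¹.mulVec (M₂.mulVec p.2)) i| := by rw [← hp2]
          _ = |∑ j, M₂⁻¹ i j * (M₂.mulVec p.2) j| := rfl
          _ ≤ ∑ j, |M₂⁻¹ i j * (M₂.mulVec p.2) j| := Finset.abs_sum_le_sum_abs _ _
          _ ≤ ∑ j, |M₂⁻¹ i j| := by
              refine Finset.sum_le_sum fun j _ => ?_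
              rw [abs_mul]
              have : |(M₂.mulVec p.2) j| ≤ 1 := le_trans (abs_le_eNorm _ j) h2
              nlinarith [abs_nonneg (M₂⁻¹ i j)]
          _ ≤ ∑ i', ∑ j, |M₂⁻¹ i' j| :=
              Finset.single_le_sum (f := fun i' => ∑ j, |M₂⁻¹ i' j|)
                (fun i' _ => Finset.sum_nonneg fun j _ => abs_nonneg _) (Finset.mem_univ i)
      rw [Metric.mem_closedBall, dist_zero_right, Prod.norm_def]
      have c1 : 0 ≤ ∑ i', ∑ j, |M₁⁻¹ i' j| :=
        Finset.sum_nonneg fun i' _ => Finset.sum_nonneg fun j _ => abs_nonneg _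
      have c2 : 0 ≤ ∑ i', ∑ j, |M₂⁻¹ i' j| :=
        Finset.sum_nonneg fun i' _ => Finset.sum_nonneg fun j _ => abs_nonneg _
      refine max_le ?_ ?_
      · refine le_trans (pi_norm_le_iff_of_nonneg c1 |>.2 fun i => ?_) (by rw [hr]; linarith)
        simpa using key1 i
      · refine le_trans (pi_norm_le_iff_of_nonneg c2 |>.2 fun i => ?_) (by rw [hr]; linarith)
        simpa using key2 i
    exact lt_of_le_of_lt (measure_mono hsub) (isCompact_closedBall 0 r).measure_lt_top
  exact ENNReal.toReal_pos hpos.ne' hfin.ne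

set_option maxHeartbeats 1000000 in
lemma discrepancy_step (Q : ℕ) (hQ : 4 ≤ Q) (c v D : ℝ) (hc : 0 < c) (hv : 0 < v) (hD : 0 < D)
    (j : ℝ) (hj : 1 ≤ j) (R R₁ R₂ Cnt : ℝ)
    (hR₁ : R₁ = Real.sqrt j / c) (hR₂ : R₂ = Real.sqrt (j + 1/2) / c)
    (hRlo : R₁ ≤ R) (hRhi : R ≤ R₂)
    (hE : (v * R₂ ^ Q / D - v * R₁ ^ Q / D) / 2 ≤ |Cnt - v * R ^ Q / D|) :
    1 / (8 * c ^ 2) * R ^ (-2 : ℝ) ≤ D / (v * R ^ Q) * |Cnt - v * R ^ Q / D| := by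
  have hj0 : (0:ℝ) < j := by linarith
  have hR₁pos : 0 < R₁ := by rw [hR₁]; exact div_pos (Real.sqrt_pos.2 hj0) hc
  have hRpos : 0 < R := lt_of_lt_of_le hR₁pos hRlo
  have hR₂pos : 0 < R₂ := lt_of_lt_of_le hRpos hRhi
  have hsq1 : R₁ ^ 2 = j / c ^ 2 := by rw [hR₁, div_pow, Real.sq_sqrt hj0.le]
  have hsq2 : R₂ ^ 2 = (j + 1/2) / c ^ 2 := by
    rw [hR₂, div_pow, Real.sq_sqrt (by linarith)]
  have key : R₁ ^ Q ≤ (1 - 1/(4*j)) * R₂ ^ Q := by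
    set t := R₁ / R₂ with ht
    have ht0 : 0 ≤ t := le_of_lt (div_pos hR₁pos hR₂pos)
    have ht1 : t ≤ 1 := (div_le_one hR₂pos).2 (le_trans hRlo hRhi)
    have ht2 : t ^ 2 = j / (j + 1/2) := by
      rw [ht, div_pow, hsq1, hsq2]
      field_simp
    have h4 : t ^ Q ≤ t ^ 4 := pow_le_pow_of_le_one ht0 ht1 hQ
    have hlt : t ^ 4 ≤ 1 - 1/(4*j) := by
      have h44 : t ^ 4 = (j / (j + 1/2)) ^ 2 := by rw [← ht2]; ring
      rw [h44]
      rw [div_pow, div_le_iff₀ (by positivity : (0:ℝ) < (j + 1/2) ^ 2)]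
      have hs : (1/(4*j)) * (4*j) = 1 := by field_simp
      have hs0 : 0 < 1/(4*j) := by positivity
      nlinarith [hs, hs0, sq_nonneg (j - 1)]
    have hR1t : R₁ = t * R₂ := by rw [ht]; field_simp
    calc R₁ ^ Q = t ^ Q * R₂ ^ Q := by rw [hR1t, mul_pow]
      _ ≤ t ^ 4 * R₂ ^ Q := mul_le_mul_of_nonneg_right h4 (by positivity)
      _ ≤ (1 - 1/(4*j)) * R₂ ^ Q := mul_le_mul_of_nonneg_right hlt (by positivity)
  have hPQ : (0:ℝ) < R ^ Q := by positivity
  have hP2 : (0:ℝ) < R₂ ^ Q := by positivity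
  have hrpow : R ^ (-2:ℝ) = (R ^ 2)⁻¹ := by
    rw [Real.rpow_neg hRpos.le, show (2:ℝ) = ((2:ℕ):ℝ) by norm_num, Real.rpow_natCast]
  rw [hrpow]
  have step2 : (R₂ ^ Q - R₁ ^ Q) / (2 * R ^ Q) ≤ D / (v * R ^ Q) * |Cnt - v * R ^ Q / D| := by
    calc (R₂ ^ Q - R₁ ^ Q) / (2 * R ^ Q)
        = D / (v * R ^ Q) * ((v * R₂ ^ Q / D - v * R₁ ^ Q / D) / 2) := by
          field_simp
      _ ≤ D / (v * R ^ Q) * |Cnt - v * R ^ Q / D| :=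
          mul_le_mul_of_nonneg_left hE (by positivity)
  have hnum : (1/(4*j)) * R₂ ^ Q ≤ R₂ ^ Q - R₁ ^ Q := by nlinarith [key]
  have hnum0 : 0 ≤ R₂ ^ Q - R₁ ^ Q := le_trans (by positivity) hnum
  have step3 : (R₂ ^ Q - R₁ ^ Q) / (2 * R₂ ^ Q) ≤ (R₂ ^ Q - R₁ ^ Q) / (2 * R ^ Q) := by
    apply div_le_div_of_nonneg_left hnum0 (by positivity)
    nlinarith [pow_le_pow_left₀ hRpos.le hRhi Q]
  have step4 : 1 / (8 * j) ≤ (R₂ ^ Q - R₁ ^ Q) / (2 * R₂ ^ Q) := by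
    have heq : 1 / (8 * j) = ((1/(4*j)) * R₂ ^ Q) / (2 * R₂ ^ Q) := by
      field_simp
      ring
    rw [heq]
    exact (div_le_div_iff_of_pos_right (by positivity)).2 hnum
  have step5 : 1 / (8 * c ^ 2) * (R ^ 2)⁻¹ ≤ 1 / (8 * j) := by
    have hR2 : j / c ^ 2 ≤ R ^ 2 := by rw [← hsq1]; exact pow_le_pow_left₀ hR₁pos.le hRlo 2
    have hcc : c ^ 2 * (j / c ^ 2) = j := by field_simp
    have h8 : 8 * j ≤ 8 * (c ^ 2 * R ^ 2) := by nlinarith [sq_nonneg c]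
    have heq : 1 / (8 * c ^ 2) * (R ^ 2)⁻¹ = 1 / (8 * (c ^ 2 * R ^ 2)) := by
      field_simp
    rw [heq]
    exact one_div_le_one_div_of_le (by positivity) h8
  linarith

set_option maxHeartbeats 1000000 in
theorem discrepancy_lower_bound_rational {q m : ℕ} (hq : 2 ≤ q) (hm : 1 ≤ m)
    (M₁ L₁ : Matrix (Fin q) (Fin q) ℝ) (M₂ L₂ : Matrix (Fin m) (Fin m) ℝ)
    (hM₁ : IsUnit M₁.det) (hM₂ : IsUnit M₂.det) (hL₁ : IsUnit L₁.det) (hL₂ : IsUnit L₂.det)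
    (α : ℝ)
    (hm1 : m = 1) (hα : α = 2)
    (hrat : ∃ c : ℝ, 0 < c ∧
      (∀ i j, ∃ z : ℤ, c * (M₁ * L₁) i j = (z : ℝ)) ∧
      (∀ i j, ∃ z : ℤ, c ^ 2 * (M₂ * L₂) i j = (z : ℝ))) :
    ∃ ε > 0, ∃ Rs : ℕ → ℝ,
      Filter.Tendsto Rs Filter.atTop Filter.atTop ∧
      ∀ n, ε * Rs n ^ (-2 : ℝ) ≤ discrepancy α M₁ M₂ L₁ L₂ (Rs n) := by
  subst hm1 hα
  obtain ⟨c, hc, hZ1, hZ2⟩ := hrat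
  choose Z hZ using hZ1
  choose W hW using hZ2
  have hv : 0 < (volume (homBall 2 M₁ M₂ 1)).toReal := vol_homBall_pos M₁ M₂ hM₁ hM₂
  set v : ℝ := (volume (homBall 2 M₁ M₂ 1)).toReal with hv_def
  have hD : 0 < |L₁.det * L₂.det| := abs_pos.2 (mul_ne_zero hL₁.ne_zero hL₂.ne_zero)
  set D : ℝ := |L₁.det * L₂.det| with hD_def
  -- integrality
  have hval : ∀ k : (Fin q → ℤ) × (Fin 1 → ℤ), ∃ nk : ℕ,
      c ^ 2 * (eNorm ((M₁ * L₁).mulVec fun i => (k.1 i : ℝ)) ^ 2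
        + eNorm ((M₂ * L₂).mulVec fun i => (k.2 i : ℝ))) = nk := by
    intro k
    set u := (M₁ * L₁).mulVec (fun i => (k.1 i : ℝ)) with hu_def
    set w := (M₂ * L₂).mulVec (fun i => (k.2 i : ℝ)) with hw_def
    have hu : ∀ i, c * u i = ((∑ j, Z i j * k.1 j : ℤ) : ℝ) := by
      intro i
      have : u i = ∑ j, (M₁ * L₁) i j * (k.1 j : ℝ) := rfl
      rw [this, Finset.mul_sum]
      push_cast
      refine Finset.sum_congr rfl fun j _ => ?_
      rw [← mul_assoc, hZ i j]
    have hw0 : c ^ 2 * w 0 = ((∑ j, W 0 j * k.2 j : ℤ) : ℝ) := by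
      have : w 0 = ∑ j, (M₂ * L₂) 0 j * (k.2 j : ℝ) := rfl
      rw [this, Finset.mul_sum]
      push_cast
      refine Finset.sum_congr rfl fun j _ => ?_
      rw [← mul_assoc, hW 0 j]
    have ha : c ^ 2 * eNorm u ^ 2 = ((∑ i, (∑ j, Z i j * k.1 j) ^ 2 : ℤ) : ℝ) := by
      rw [eNorm_sq, Finset.mul_sum]
      push_cast
      refine Finset.sum_congr rfl fun i _ => ?_
      have h := hu i
      push_cast at h
      calc c ^ 2 * u i ^ 2 = (c * u i) ^ 2 := by ring
        _ = _ := by rw [h]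
    have hb : c ^ 2 * eNorm w = |((∑ j, W 0 j * k.2 j : ℤ) : ℝ)| := by
      have habs : c ^ 2 * |w 0| = |c ^ 2 * w 0| := by
        rw [abs_mul, abs_of_pos (show (0:ℝ) < c ^ 2 by positivity)]
      rw [eNorm_fin_one, habs, hw0]
    refine ⟨((∑ i, (∑ j, Z i j * k.1 j) ^ 2 : ℤ) + |∑ j, W 0 j * k.2 j|).toNat, ?_⟩
    rw [mul_add, ha, hb]
    have hnn : (0:ℤ) ≤ (∑ i, (∑ j, Z i j * k.1 j) ^ 2) + |∑ j, W 0 j * k.2 j| := by positivity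
    rw [← Int.cast_natCast (R := ℝ), Int.toNat_of_nonneg hnn]
    push_cast
    ring
  choose NK hNK using hval
  -- membership criterion
  have hmem : ∀ (k : (Fin q → ℤ) × (Fin 1 → ℤ)) (R : ℝ), 0 < R →
      (latticePoint L₁ L₂ k ∈ homBall 2 M₁ M₂ R ↔ (NK k : ℝ) ≤ c ^ 2 * R ^ 2) := by
    intro k R hR
    have h0 : homNorm 2 M₁ M₂ (latticePoint L₁ L₂ k)
        = Real.sqrt (eNorm ((M₁ * L₁).mulVec fun i => (k.1 i : ℝ)) ^ 2
            + eNorm ((M₂ * L₂).mulVec fun i => (k.2 i : ℝ))) := by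
      rw [homNorm_two]
      unfold latticePoint
      rw [Matrix.mulVec_mulVec, Matrix.mulVec_mulVec]
    set s : ℝ := eNorm ((M₁ * L₁).mulVec fun i => (k.1 i : ℝ)) ^ 2
        + eNorm ((M₂ * L₂).mulVec fun i => (k.2 i : ℝ)) with hs_def
    have hs0 : 0 ≤ s :=
      add_nonneg (sq_nonneg _) (eNorm_nonneg _)
    have hiff : Real.sqrt s ≤ R ↔ s ≤ R ^ 2 := by
      constructor
      · intro h
        nlinarith [Real.sq_sqrt hs0, Real.sqrt_nonneg s]
      · intro h
        calc Real.sqrt s ≤ Real.sqrt (R ^ 2) := Real.sqrt_le_sqrt h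
          _ = R := Real.sqrt_sq hR.le
    have hmem0 : latticePoint L₁ L₂ k ∈ homBall 2 M₁ M₂ R ↔ Real.sqrt s ≤ R := by
      simp only [homBall, Set.mem_setOf_eq, h0]
    rw [hmem0, hiff, ← hNK k]
    constructor
    · intro h
      exact mul_le_mul_of_nonneg_left h (by positivity)
    · intro h
      exact le_of_mul_le_mul_left h (by positivity)
  -- radii
  set R₁ : ℕ → ℝ := fun n => Real.sqrt ((n : ℝ) + 1) / c with hR₁def
  set R₂ : ℕ → ℝ := fun n => Real.sqrt ((n : ℝ) + 1 + 1/2) / c with hR₂def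
  have hR₁pos : ∀ n, 0 < R₁ n := fun n =>
    div_pos (Real.sqrt_pos.2 (by positivity)) hc
  have hR₂pos : ∀ n, 0 < R₂ n := fun n =>
    div_pos (Real.sqrt_pos.2 (by positivity)) hc
  have hR₁₂ : ∀ n, R₁ n ≤ R₂ n := by
    intro n
    simp only [hR₁def, hR₂def]
    exact (div_le_div_iff_of_pos_right hc).2 (Real.sqrt_le_sqrt (by linarith))
  have hc2R1 : ∀ n, c ^ 2 * (R₁ n) ^ 2 = (n : ℝ) + 1 := by
    intro n
    simp only [hR₁def]
    rw [div_pow, Real.sq_sqrt (by positivity)]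
    field_simp
  have hc2R2 : ∀ n, c ^ 2 * (R₂ n) ^ 2 = (n : ℝ) + 1 + 1/2 := by
    intro n
    simp only [hR₂def]
    rw [div_pow, Real.sq_sqrt (by positivity)]
    field_simp
  -- counts agree
  have hcnt : ∀ n, latticeCount 2 M₁ M₂ L₁ L₂ (R₁ n) = latticeCount 2 M₁ M₂ L₁ L₂ (R₂ n) := by
    intro n
    unfold latticeCount
    apply Nat.card_congr
    apply Equiv.subtypeEquivRight
    intro k
    rw [hmem k _ (hR₁pos n), hmem k _ (hR₂pos n), hc2R1, hc2R2]
    constructor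
    · intro h; linarith
    · intro h
      have h1 : (NK k : ℝ) < (n : ℝ) + 2 := by linarith
      have h2 : NK k < n + 2 := by exact_mod_cast h1
      have h3 : NK k ≤ n + 1 := by omega
      exact_mod_cast h3
  -- assemble
  set Cnt : ℝ → ℝ := fun R => (latticeCount 2 M₁ M₂ L₁ L₂ R : ℝ) with hCnt_def
  set V : ℝ → ℝ := fun R => v * R ^ (q + 2 * 1) / D with hV_def
  set E : ℝ → ℝ := fun R => |Cnt R - V R| with hE_def
  set Rs : ℕ → ℝ := fun n => if (V (R₂ n) - V (R₁ n)) / 2 ≤ E (R₁ n) then R₁ n else R₂ n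
    with hRs_def
  have hRsLo : ∀ n, R₁ n ≤ Rs n := by
    intro n
    simp only [hRs_def]
    split_ifs
    · exact le_refl _
    · exact hR₁₂ n
  have hRsHi : ∀ n, Rs n ≤ R₂ n := by
    intro n
    simp only [hRs_def]
    split_ifs
    · exact hR₁₂ n
    · exact le_refl _
  refine ⟨1 / (8 * c ^ 2), by positivity, Rs, ?_, ?_⟩
  · -- Tendsto
    apply Filter.tendsto_atTop_mono hRsLo
    have heq : R₁ = fun n : ℕ => ((n : ℝ) + 1) ^ ((1:ℝ)/2) / c := by
      funext n
      simp only [hR₁def, Real.sqrt_eq_rpow]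
    rw [heq]
    exact ((tendsto_rpow_atTop (by norm_num : (0:ℝ) < 1/2)).comp
      (Filter.tendsto_atTop_add_const_right _ 1 tendsto_natCast_atTop_atTop)).atTop_div_const hc
  · intro n
    have hQ : 4 ≤ q + 2 * 1 := by omega
    have hj : (1:ℝ) ≤ (n : ℝ) + 1 := by
      have := Nat.cast_nonneg (α := ℝ) n
      linarith
    have hsq1 : R₁ n = Real.sqrt ((n:ℝ) + 1) / c := rfl
    have hsq2 : R₂ n = Real.sqrt (((n:ℝ) + 1) + 1/2) / c := rfl
    have hdisc : discrepancy 2 M₁ M₂ L₁ L₂ (Rs n)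
        = D / (v * Rs n ^ (q + 2 * 1)) * |Cnt (Rs n) - v * Rs n ^ (q + 2 * 1) / D| := rfl
    rw [hdisc]
    by_cases hcase : (V (R₂ n) - V (R₁ n)) / 2 ≤ E (R₁ n)
    · have hRsn : Rs n = R₁ n := by simp only [hRs_def, if_pos hcase]
      rw [hRsn]
      refine discrepancy_step (q + 2 * 1) hQ c v D hc hv hD ((n:ℝ)+1) hj
        (R₁ n) (R₁ n) (R₂ n) (Cnt (R₁ n)) hsq1 hsq2 (le_refl _) (hR₁₂ n) ?_
      simpa only [hV_def, hE_def] using hcase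
    · have hRsn : Rs n = R₂ n := by simp only [hRs_def, if_neg hcase]
      rw [hRsn]
      refine discrepancy_step (q + 2 * 1) hQ c v D hc hv hD ((n:ℝ)+1) hj
        (R₂ n) (R₁ n) (R₂ n) (Cnt (R₂ n)) hsq1 hsq2 (hR₁₂ n) (le_refl _) ?_
      -- triangle inequality
      push_neg at hcase
      have hceq : Cnt (R₁ n) = Cnt (R₂ n) := by
        simp only [hCnt_def]
        exact_mod_cast hcnt n
      have t1 := le_abs_self (Cnt (R₁ n) - V (R₁ n))
      have t2 := neg_abs_le (Cnt (R₁ n) - V (R₁ n))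
      have hE1 : E (R₁ n) = |Cnt (R₁ n) - V (R₁ n)| := rfl
      have hE2 : E (R₂ n) = |Cnt (R₂ n) - V (R₂ n)| := rfl
      have t3 := le_abs_self (Cnt (R₂ n) - V (R₂ n))
      have t4 := neg_abs_le (Cnt (R₂ n) - V (R₂ n))
      have hgoal : (V (R₂ n) - V (R₁ n)) / 2 ≤ |Cnt (R₂ n) - V (R₂ n)| := by
        rw [hE1, hceq] at hcase
        rw [hceq] at t1 t2
        linarith
      simpa only [hV_def] using hgoal
end
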